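/- With λ, Δ, S, C, a, b as defined, the point mass at delay Δ satisfies its steady-state equation: b = (1/2)·( 1/2 − ( a + b·exp(−λΔ) + ∫_0^Δ C·exp(λτ/2)·exp(−λτ) dτ ) ). (This is the relation ĝ(Δ_d) = ½(½ − I) with I = ∫_0^∞ e^{−λτ} g(τ) dτ from the proof of Proposition 1, written out for g = g̃ + a·δ_0 + b·δ_Δ.) -/

import Mathlib

open Real intervalIntegral

/-!
With `q = e^{-λΔ/2}` and `k = 2C/λ` one has `a = k`, `b = 1/2 - k/q`, `e^{-λΔ} = q²` and
`∫₀^Δ C e^{-λτ/2} dτ = k(1 - q)`. The steady-state equation is then linear in `k` and reduces to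
`k·S = (1 + q²)/4` with `S = q⁻¹ + q - 1`, which is the definition of `C`; here `S ≠ 0` because
`S = 2 cosh(λΔ/2) - 1 ≥ 1`.
-/

theorem integral_exp_mul_of_ne_zero {c : ℝ} (hc : c ≠ 0) (a b : ℝ) :
    ∫ x in a..b, exp (c * x) = (exp (c * b) - exp (c * a)) / c := by
  rw [integral_comp_mul_left exp hc, integral_exp, smul_eq_mul, inv_mul_eq_div]

theorem integral_exp_half_mul_mul_exp_neg_mul {lam : ℝ} (hlam : lam ≠ 0) (C Δ : ℝ) :
    ∫ τ in (0 : ℝ)..Δ, C * exp (lam * τ / 2) * exp (-(lam * τ)) =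
      2 * C / lam * (1 - exp (-(lam * Δ) / 2)) := by
  have hc : -(lam / 2) ≠ 0 := by simpa using hlam
  have hexp (τ : ℝ) : C * exp (lam * τ / 2) * exp (-(lam * τ)) = C * exp (-(lam / 2) * τ) := by
    rw [mul_assoc, ← exp_add]; ring_nf
  simp only [hexp, integral_const_mul, integral_exp_mul_of_ne_zero hc, mul_zero, exp_zero]
  field_simp
  ring

theorem exp_add_exp_neg_sub_one_pos (x : ℝ) : 0 < exp x + exp (-x) - 1 := by
  linarith [one_le_cosh x, cosh_eq x]

theorem point_mass_delta_eq_general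
    (lam Δ S C a b : ℝ) (hlam : 0 < lam)
    (hS : S = Real.exp (lam * Δ / 2) + Real.exp (-(lam * Δ) / 2) - 1)
    (hC : C = lam * (1 + Real.exp (-(lam * Δ))) / (8 * S))
    (ha : a = 2 * C / lam)
    (hb : b = 1 / 2 - (2 * Real.exp (lam * Δ / 2) / lam) * C) :
    b = (1 / 2) * (1 / 2 -
        (a + b * Real.exp (-(lam * Δ)) +
          ∫ τ in (0 : ℝ)..Δ, C * Real.exp (lam * τ / 2) * Real.exp (-(lam * τ)))) := by
  rw [integral_exp_half_mul_mul_exp_neg_mul hlam.ne']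
  have hS_pos : 0 < S := by
    rw [hS, neg_div]; exact exp_add_exp_neg_sub_one_pos _
  set q := exp (-(lam * Δ) / 2)
  have hq : q ≠ 0 := (exp_pos _).ne'
  have hq_inv : exp (lam * Δ / 2) = q⁻¹ := by rw [← exp_neg]; ring_nf
  have hq_sq : exp (-(lam * Δ)) = q ^ 2 := by rw [← exp_nat_mul]; ring_nf
  rw [hq_inv] at hS hb
  rw [hq_sq] at hC ⊢
  have hkS : 2 * C / lam * S = (1 + q ^ 2) / 4 := by
    rw [hC]; field_simp; ring
  rw [ha, hb]
  linear_combination -hkS - (C / lam * q) * mul_inv_cancel₀ hq + (2 * C / lam) * hS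

/-- Steady-state equation for the point mass `b = ĝ(Δ)` at delay `Δ`
(Proposition 1 of the paper): `ĝ(Δ) = ½(½ − I)` with
`I = ∫₀^∞ e^{−λτ} g(τ) dτ`, written out for `g = g̃ + a·δ₀ + b·δ_Δ`. -/
theorem point_mass_delta_eq
    (lam Δ S C a b : ℝ) (hlam : 0 < lam) (hΔ : 0 < Δ)
    (hS : S = Real.exp (lam * Δ / 2) + Real.exp (-(lam * Δ) / 2) - 1)
    (hC : C = lam * (1 + Real.exp (-(lam * Δ))) / (8 * S))
    (ha : a = 2 * C / lam)
    (hb : b = 1 / 2 - (2 * Real.exp (lam * Δ / 2) / lam) * C) :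
    b = (1 / 2) * (1 / 2 -
        (a + b * Real.exp (-(lam * Δ)) +
          ∫ τ in (0 : ℝ)..Δ, C * Real.exp (lam * τ / 2) * Real.exp (-(lam * τ)))) :=
  point_mass_delta_eq_general lam Δ S C a b hlam hS hC ha hb
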